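/- Free-field (Feigin–Fuks type) realization of the NSR algebra: the operators L_n = (1/2) Σ_{k≠0,n} c_k c_{n-k} + (1/2) Σ_r (r - n/2) ψ_{n-r} ψ_r + (i/2)(Qn + 2P) c_n (for n ≠ 0), L_0 = Σ_{k>0} c_{-k} c_k + Σ_{r>0} r ψ_{-r} ψ_r + (1/2)(Q²/4 - P²), G_r = Σ_{n≠0} c_n ψ_{r-n} + i(Qr + P) ψ_r, acting on the Fock space of one free boson and one free NS fermion, satisfy the NSR relations with central charge c = 1 + 2Q². In particular, verify {G_{1/2}, G_{-1/2}} = 2 L_0 on the Fock space. -/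

import Mathlib

/-!
Write `G_r = S_r + α_r ψ_r` with `S_r = ∑_{n≠0} c_n ψ_{r-n}` and `α_r = i(Qr + P)`.
The cross terms `{S_r, ψ_s} = c_{r+s}` vanish for `r + s = 0` because the mode `c_0` is absent,
and `α_{1/2} α_{-1/2} {ψ_{1/2}, ψ_{-1/2}} = Q²/4 - P²` is the constant of `2 L₀`. On a vector,
all sums live in a finite window `[-N, N]`; there `{S_{1/2}, S_{-1/2}}` collapses to its
diagonal `∑_{n≠0} (c_{-n} c_n + n ψ_{-n} ψ_{n-1})`, and pairing `n` with `-n`, the constants `n`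
from normal ordering the bosons cancel against the constants `-n` from normal ordering the
fermions.
-/

open scoped BigOperators

variable {V : Type*} [AddCommGroup V] [Module ℂ V]

/-- The free-field NSR supercurrent mode
`G_{a+1/2} = ∑_{n≠0} c_n ψ_{a+1/2-n} + i(Q(a+1/2) + P) ψ_{a+1/2}`, where
`ps m` denotes the fermion mode `ψ_{m+1/2}` and `cO n` the boson mode `c_n`. -/
noncomputable def Gop (cO ps : ℤ → V →ₗ[ℂ] V) (Q P : ℂ) (a : ℤ) (v : V) : V :=
  (∑ᶠ n : ℤ, if n = 0 then 0 else cO n (ps (a - n) v)) +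
    (Complex.I * (Q * ((a : ℂ) + 1 / 2) + P)) • ps a v

/-- The free-field NSR Virasoro zero mode
`L₀ = ∑_{k>0} c_{-k} c_k + ∑_{r>0} r ψ_{-r} ψ_r + (1/2)(Q²/4 - P²)`. -/
noncomputable def L0op (cO ps : ℤ → V →ₗ[ℂ] V) (Q P : ℂ) (v : V) : V :=
  (∑ᶠ k : ℤ, if 0 < k then cO (-k) (cO k v) else 0) +
    (∑ᶠ m : ℤ, if 0 ≤ m then ((m : ℂ) + 1 / 2) • ps (-m - 1) (ps m v) else 0) +
    (1 / 2 * (Q ^ 2 / 4 - P ^ 2)) • v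

open Finset

theorem Set.Finite.exists_nat_subset_Ioo {s : Set ℤ} (hs : s.Finite) :
    ∃ N : ℕ, s ⊆ Set.Ioo (-(N : ℤ)) N := by
  obtain ⟨B, hB⟩ := (hs.image Int.natAbs).bddAbove
  refine ⟨B + 1, fun x hx => ?_⟩
  have := hB ⟨x, hx, rfl⟩
  simp only [Set.mem_Ioo]
  omega

theorem Finset.sum_Icc_neg_eq_add_sum_range {M : Type*} [AddCommMonoid M] (g : ℤ → M)
    (N : ℕ) :
    ∑ n ∈ Icc (-(N : ℤ)) N, g n = g 0 + ∑ k ∈ range N, (g (k + 1) + g (-(k + 1))) := by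
  induction N with
  | zero => simp
  | succ N ih =>
    have hIcc : Icc (-((N + 1 : ℕ) : ℤ)) (N + 1 : ℕ) =
        insert (-((N : ℤ) + 1)) (insert ((N : ℤ) + 1) (Icc (-(N : ℤ)) N)) := by
      ext x
      simp only [mem_insert, mem_Icc]
      push_cast
      omega
    rw [hIcc, sum_insert (by simp only [mem_insert, mem_Icc]; omega),
      sum_insert (by simp only [mem_Icc]; omega), ih, sum_range_succ]
    abel

theorem Finset.sum_range_succ_smul_add_succ {R M : Type*} [CommSemiring R] [AddCommMonoid M]
    [Module R M] (f : ℕ → M) (N : ℕ) :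
    ∑ k ∈ range N, ((k : R) + 1) • (f k + f (k + 1)) =
      ∑ m ∈ range N, (2 * (m : R) + 1) • f m + (N : R) • f N := by
  induction N with
  | zero => simp
  | succ N ih =>
    rw [sum_range_succ, ih, sum_range_succ]
    push_cast
    module

theorem finsum_eq_sum_range_of_support_subset {M : Type*} [AddCommMonoid M] (f : ℤ → M)
    {N : ℕ} (h : Function.support f ⊆ Set.Ico 0 (N : ℤ)) :
    ∑ᶠ n, f n = ∑ m ∈ range N, f m := by
  rw [finsum_eq_finsetSum_of_support_subset f (s := (range N).map Nat.castEmbedding), sum_map]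
  · rfl
  · intro x hx
    obtain ⟨h0, hN⟩ := h hx
    simp only [coe_map, coe_range, Set.mem_image, Set.mem_Iio, Nat.castEmbedding_apply]
    exact ⟨x.toNat, by omega, by omega⟩

theorem finsum_ite_pos_eq_sum_range {M : Type*} [AddCommMonoid M] (g : ℤ → M) {N : ℕ}
    (h : (Function.support fun k : ℤ => if 0 < k then g k else 0) ⊆ Set.Ioo (-(N : ℤ)) N) :
    (∑ᶠ k : ℤ, if 0 < k then g k else 0) = ∑ k ∈ range N, g ((k : ℤ) + 1) := by
  rw [finsum_eq_sum_range_of_support_subset _ (N := N + 1), sum_range_succ']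
  · simp
  · intro x hx
    have hpos : 0 < x := by by_contra hx0; exact hx (if_neg hx0)
    have := (h hx).2
    simp only [Set.mem_Ico]
    omega

theorem finsum_ite_nonneg_eq_sum_range {M : Type*} [AddCommMonoid M] (g : ℤ → M) {N : ℕ}
    (h : (Function.support fun m : ℤ => if 0 ≤ m then g m else 0) ⊆ Set.Ioo (-(N : ℤ)) N) :
    (∑ᶠ m : ℤ, if 0 ≤ m then g m else 0) = ∑ m ∈ range N, g m := by
  rw [finsum_eq_sum_range_of_support_subset _ (N := N)]
  · simp
  · intro x hx
    have hpos : 0 ≤ x := by by_contra hx0; exact hx (if_neg hx0)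
    have := (h hx).2
    simp only [Set.mem_Ico]
    omega

section FreeField

variable (cO ps : ℤ → V →ₗ[ℂ] V)

noncomputable def Gosc (a : ℤ) (v : V) : V :=
  ∑ᶠ n : ℤ, if n = 0 then 0 else cO n (ps (a - n) v)

theorem Gop_eq_Gosc_add (Q P : ℂ) (a : ℤ) (v : V) :
    Gop cO ps Q P a v = Gosc cO ps a v + (Complex.I * (Q * ((a : ℂ) + 1 / 2) + P)) • ps a v :=
  rfl

variable {cO ps}

theorem isLinearMap_Gosc {a : ℤ}
    (hfin : ∀ v : V,
      (Function.support fun n : ℤ => if n = 0 then (0 : V) else cO n (ps (a - n) v)).Finite) :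
    IsLinearMap ℂ (Gosc cO ps a) where
  map_add u w := by
    rw [Gosc, Gosc, Gosc, ← finsum_add_distrib (hfin u) (hfin w)]
    refine finsum_congr fun n => ?_
    split_ifs <;> simp
  map_smul c w := by
    rw [Gosc, Gosc, smul_finsum' c (hfin w)]
    refine finsum_congr fun n => ?_
    split_ifs <;> simp

theorem Gosc_ps_add_ps_Gosc
    (hpp : ∀ (r s : ℤ) (v : V),
      ps r (ps s v) + ps s (ps r v) = if r + s + 1 = 0 then v else 0)
    (hcp : ∀ (n r : ℤ) (v : V), cO n (ps r v) = ps r (cO n v)) {a : ℤ}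
    (hfin : ∀ v : V,
      (Function.support fun n : ℤ => if n = 0 then (0 : V) else cO n (ps (a - n) v)).Finite)
    (b : ℤ) (v : V) :
    Gosc cO ps a (ps b v) + ps b (Gosc cO ps a v) =
      if a + b + 1 = 0 then 0 else cO (a + b + 1) v := by
  have hterm : ∀ n : ℤ, ((if n = 0 then 0 else cO n (ps (a - n) (ps b v))) +
      ps b (if n = 0 then 0 else cO n (ps (a - n) v))) =
      if n ≠ 0 ∧ n = a + b + 1 then cO n v else 0 := by
    intro n
    by_cases hn : n = 0
    · simp [hn]
    · rw [if_neg hn, if_neg hn, ← hcp, ← map_add, hpp]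
      by_cases hab : n = a + b + 1
      · rw [if_pos (by omega), if_pos ⟨hn, hab⟩]
      · rw [if_neg (by omega), if_neg (by tauto), map_zero]
  have hfin' : (Function.support fun n : ℤ =>
      ps b (if n = 0 then (0 : V) else cO n (ps (a - n) v))).Finite :=
    (hfin v).subset fun n hn h => hn (by simp only at h ⊢; rw [h, map_zero])
  rw [Gosc, Gosc, map_finsum (ps b) (hfin v), ← finsum_add_distrib (hfin (ps b v)) hfin',
    finsum_congr hterm]
  split_ifs with hab
  · exact finsum_eq_zero_of_forall_eq_zero fun n => if_neg (by omega)
  · rw [finsum_eq_single _ (a + b + 1) fun n hn => if_neg (by tauto), if_pos ⟨hab, rfl⟩]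

theorem cO_cO_ps_ps_add_cO_cO_ps_ps
    (hcc : ∀ (n m : ℤ), n ≠ 0 → m ≠ 0 → ∀ v : V,
      cO n (cO m v) - cO m (cO n v) = if n + m = 0 then (n : ℂ) • v else 0)
    (hpp : ∀ (r s : ℤ) (v : V),
      ps r (ps s v) + ps s (ps r v) = if r + s + 1 = 0 then v else 0)
    {n m : ℤ} (hn : n ≠ 0) (hm : m ≠ 0) (r s : ℤ) (v : V) :
    cO n (cO m (ps r (ps s v))) + cO m (cO n (ps s (ps r v))) =
      (if n + m = 0 then (n : ℂ) • ps r (ps s v) else 0) +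
        if r + s + 1 = 0 then cO m (cO n v) else 0 := by
  rw [sub_eq_iff_eq_add'.mp (hcc n m hn hm _), add_right_comm, ← map_add, ← map_add, hpp]
  split_ifs <;> simp [add_comm]

theorem Gosc_eq_sum_of_support_subset {a : ℤ} {v : V} {u : Finset ℤ}
    (hu : (Function.support fun n : ℤ => if n = 0 then (0 : V) else cO n (ps (a - n) v)) ⊆ u) :
    Gosc cO ps a v = ∑ n ∈ u, if n = 0 then 0 else cO n (ps (a - n) v) :=
  finsum_eq_finsetSum_of_support_subset _ hu

theorem Gosc_Gosc_eq_sum_sum (hcp : ∀ (n r : ℤ) (v : V), cO n (ps r v) = ps r (cO n v))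
    {a b : ℤ} {v : V} {u : Finset ℤ}
    (hb : (Function.support fun m : ℤ => if m = 0 then (0 : V) else cO m (ps (b - m) v)) ⊆ u)
    (ha : (Function.support fun n : ℤ =>
      if n = 0 then (0 : V) else cO n (ps (a - n) (Gosc cO ps b v))) ⊆ u) :
    Gosc cO ps a (Gosc cO ps b v) = ∑ n ∈ u, ∑ m ∈ u,
      if n = 0 ∨ m = 0 then 0 else cO n (cO m (ps (a - n) (ps (b - m) v))) := by
  rw [Gosc_eq_sum_of_support_subset ha, Gosc_eq_sum_of_support_subset hb]
  refine sum_congr rfl fun n _ => ?_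
  by_cases hn : n = 0
  · simp [hn]
  rw [if_neg hn, map_sum, map_sum]
  refine sum_congr rfl fun m _ => ?_
  by_cases hm : m = 0
  · simp [hm]
  rw [if_neg hm, if_neg (by tauto), ← hcp m]

/-- For `a + b + 1 = 0`, i.e. `r + s = 0` for the modes `G_r`, `G_s`, only the diagonal `m = -n`
of the double sum survives. -/
theorem Gosc_anticomm_eq_sum
    (hcc : ∀ (n m : ℤ), n ≠ 0 → m ≠ 0 → ∀ v : V,
      cO n (cO m v) - cO m (cO n v) = if n + m = 0 then (n : ℂ) • v else 0)
    (hpp : ∀ (r s : ℤ) (v : V),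
      ps r (ps s v) + ps s (ps r v) = if r + s + 1 = 0 then v else 0)
    (hcp : ∀ (n r : ℤ) (v : V), cO n (ps r v) = ps r (cO n v))
    {a b : ℤ} (hab : a + b + 1 = 0) {v : V} {N : ℕ}
    (ha : (Function.support fun n : ℤ => if n = 0 then (0 : V) else cO n (ps (a - n) v)) ⊆
      Icc (-(N : ℤ)) N)
    (hb : (Function.support fun n : ℤ => if n = 0 then (0 : V) else cO n (ps (b - n) v)) ⊆
      Icc (-(N : ℤ)) N)
    (hab' : (Function.support fun n : ℤ =>
      if n = 0 then (0 : V) else cO n (ps (a - n) (Gosc cO ps b v))) ⊆ Icc (-(N : ℤ)) N)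
    (hba' : (Function.support fun n : ℤ =>
      if n = 0 then (0 : V) else cO n (ps (b - n) (Gosc cO ps a v))) ⊆ Icc (-(N : ℤ)) N) :
    Gosc cO ps a (Gosc cO ps b v) + Gosc cO ps b (Gosc cO ps a v) =
      ∑ n ∈ Icc (-(N : ℤ)) N,
        if n = 0 then 0 else cO (-n) (cO n v) + (n : ℂ) • ps (a - n) (ps (b + n) v) := by
  rw [Gosc_Gosc_eq_sum_sum hcp ha hba', sum_comm, Gosc_Gosc_eq_sum_sum hcp hb hab',
    ← sum_add_distrib]
  refine sum_congr rfl fun n hn => ?_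
  rw [← sum_add_distrib]
  by_cases hn0 : n = 0
  · simp [hn0]
  have hdiag : ∀ m : ℤ,
      ((if n = 0 ∨ m = 0 then 0 else cO n (cO m (ps (a - n) (ps (b - m) v)))) +
        if m = 0 ∨ n = 0 then 0 else cO m (cO n (ps (b - m) (ps (a - n) v)))) =
      if -n = m then cO (-n) (cO n v) + (n : ℂ) • ps (a - n) (ps (b + n) v) else 0 := by
    intro m
    by_cases hm : m = 0
    · simp [hm, hn0]
    rw [if_neg (by tauto), if_neg (by tauto), cO_cO_ps_ps_add_cO_cO_ps_ps hcc hpp hn0 hm]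
    by_cases hnm : -n = m
    · subst hnm
      rw [if_pos (by ring), if_pos (by omega), if_pos rfl, sub_neg_eq_add, add_comm]
    · rw [if_neg (by omega), if_neg (by omega), if_neg hnm, add_zero]
  rw [sum_congr rfl fun m _ => hdiag m, sum_ite_eq, if_pos, if_neg hn0]
  simp only [mem_Icc] at hn ⊢
  omega

/-- The constants `n` produced by normal ordering `c_n c_{-n}` and `ψ_n ψ_{-n-1}` cancel in pairs;
`hN` disposes of the boundary term `N ψ_{-N-1/2} ψ_{N+1/2}` of the truncation. -/
theorem sum_Icc_anticomm_diag_eq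
    (hcc : ∀ (n m : ℤ), n ≠ 0 → m ≠ 0 → ∀ v : V,
      cO n (cO m v) - cO m (cO n v) = if n + m = 0 then (n : ℂ) • v else 0)
    (hpp : ∀ (r s : ℤ) (v : V),
      ps r (ps s v) + ps s (ps r v) = if r + s + 1 = 0 then v else 0)
    {N : ℕ} {v : V} (hN : ps (-(N : ℤ) - 1) (ps N v) = 0) :
    ∑ n ∈ Icc (-(N : ℤ)) N,
        (if n = 0 then 0 else cO (-n) (cO n v) + (n : ℂ) • ps (0 - n) (ps (-1 + n) v)) =
      (2 : ℂ) • ∑ k ∈ range N, cO (-((k : ℤ) + 1)) (cO ((k : ℤ) + 1) v) +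
        (2 : ℂ) • ∑ m ∈ range N, ((m : ℂ) + 1 / 2) • ps (-(m : ℤ) - 1) (ps m v) := by
  set f : ℕ → V := fun m => ps (-(m : ℤ) - 1) (ps m v) with hf
  have hfN : f N = 0 := hN
  calc _ = ∑ k ∈ range N, ((2 : ℂ) • cO (-((k : ℤ) + 1)) (cO ((k : ℤ) + 1) v) +
          ((k : ℂ) + 1) • (f k + f (k + 1))) := by
        rw [sum_Icc_neg_eq_add_sum_range, if_pos rfl, zero_add]
        refine sum_congr rfl fun k _ => ?_
        set n : ℤ := (k : ℤ) + 1 with hn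
        have hboson := hcc n (-n) (by omega) (by omega) v
        rw [if_pos (add_neg_cancel n), sub_eq_iff_eq_add'] at hboson
        have hfermion := hpp n (-1 + -n) v
        rw [if_pos (by ring), ← eq_sub_iff_add_eq] at hfermion
        have hfk : f k = ps (-n) (ps (-1 + n) v) := by
          simp only [hf, hn]
          ring_nf
        have hfk1 : f (k + 1) = ps (-1 + -n) (ps n v) := by
          simp only [hf, hn]
          push_cast
          ring_nf
        rw [if_neg (by omega), if_neg (by omega), neg_neg, hboson, zero_sub, sub_neg_eq_add,
          zero_add, hfermion, hfk, hfk1, hn]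
        push_cast
        module
    _ = _ := by
        rw [sum_add_distrib, ← smul_sum, sum_range_succ_smul_add_succ, hfN, smul_zero, add_zero,
          smul_sum, smul_sum]
        congr 1
        refine sum_congr rfl fun m _ => ?_
        module

theorem Gosc_zero_anticomm_eq_two_smul
    (hcc : ∀ (n m : ℤ), n ≠ 0 → m ≠ 0 → ∀ v : V,
      cO n (cO m v) - cO m (cO n v) = if n + m = 0 then (n : ℂ) • v else 0)
    (hpp : ∀ (r s : ℤ) (v : V),
      ps r (ps s v) + ps s (ps r v) = if r + s + 1 = 0 then v else 0)
    (hcp : ∀ (n r : ℤ) (v : V), cO n (ps r v) = ps r (cO n v))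
    (hfinG : ∀ (a : ℤ) (v : V),
      (Function.support fun n : ℤ => if n = 0 then (0 : V) else cO n (ps (a - n) v)).Finite)
    {v : V}
    (hfinB : (Function.support fun k : ℤ => if 0 < k then cO (-k) (cO k v) else 0).Finite)
    (hfinF : (Function.support fun m : ℤ =>
        if 0 ≤ m then ((m : ℂ) + 1 / 2) • ps (-m - 1) (ps m v) else 0).Finite) :
    Gosc cO ps 0 (Gosc cO ps (-1) v) + Gosc cO ps (-1) (Gosc cO ps 0 v) =
      (2 : ℂ) • (∑ᶠ k : ℤ, if 0 < k then cO (-k) (cO k v) else 0) +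
        (2 : ℂ) • ∑ᶠ m : ℤ,
          if 0 ≤ m then ((m : ℂ) + 1 / 2) • ps (-m - 1) (ps m v) else 0 := by
  obtain ⟨N, hN⟩ := Set.Finite.exists_nat_subset_Ioo
    ((((hfinG 0 v).union (hfinG (-1) v)).union
      ((hfinG 0 (Gosc cO ps (-1) v)).union (hfinG (-1) (Gosc cO ps 0 v)))).union
      (hfinB.union hfinF))
  have hsub : ∀ {s : Set ℤ}, s ⊆ _ → s ⊆ Icc (-(N : ℤ)) N := fun hs => by
    rw [coe_Icc]
    exact (hs.trans hN).trans Set.Ioo_subset_Icc_self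
  have hfN : ps (-(N : ℤ) - 1) (ps N v) = 0 := by
    have hN' : (N : ℤ) ∉ Set.Ioo (-(N : ℤ)) N := fun h => h.2.false
    have hterm := Function.notMem_support.mp fun h => hN' (hN (Or.inr (Or.inr h)))
    rw [if_pos (Int.natCast_nonneg N), smul_eq_zero] at hterm
    have hN0 : ((N + 1 / 2 : ℝ) : ℂ) ≠ 0 := Complex.ofReal_ne_zero.mpr (by positivity)
    push_cast at hN0
    exact hterm.resolve_left hN0
  rw [Gosc_anticomm_eq_sum hcc hpp hcp (by norm_num)
      (hsub fun x hx => by simp only [Set.mem_union]; tauto)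
      (hsub fun x hx => by simp only [Set.mem_union]; tauto)
      (hsub fun x hx => by simp only [Set.mem_union]; tauto)
      (hsub fun x hx => by simp only [Set.mem_union]; tauto),
    sum_Icc_anticomm_diag_eq hcc hpp hfN]
  rw [finsum_ite_pos_eq_sum_range _ fun x hx => hN (Or.inr (Or.inl hx)),
    finsum_ite_nonneg_eq_sum_range (fun m : ℤ => ((m : ℂ) + 1 / 2) • ps (-m - 1) (ps m v))
      fun x hx => hN (Or.inr (Or.inr hx))]
  simp only [Int.cast_natCast]

end FreeField

theorem free_field_GG_eq_two_L0_general (cO ps : ℤ → V →ₗ[ℂ] V) (Q P : ℂ)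
    (hcc : ∀ (n m : ℤ), n ≠ 0 → m ≠ 0 → ∀ v : V,
      cO n (cO m v) - cO m (cO n v) = if n + m = 0 then (n : ℂ) • v else 0)
    (hpp : ∀ (r s : ℤ) (v : V),
      ps r (ps s v) + ps s (ps r v) = if r + s + 1 = 0 then v else 0)
    (hcp : ∀ (n r : ℤ) (v : V), cO n (ps r v) = ps r (cO n v))
    (hfinG : ∀ (a : ℤ) (v : V),
      (Function.support fun n : ℤ => if n = 0 then (0 : V) else cO n (ps (a - n) v)).Finite)
    (hfinB : ∀ v : V,
      (Function.support fun k : ℤ => if 0 < k then cO (-k) (cO k v) else 0).Finite)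
    (hfinF : ∀ v : V,
      (Function.support fun m : ℤ =>
        if 0 ≤ m then ((m : ℂ) + 1 / 2) • ps (-m - 1) (ps m v) else 0).Finite) :
    ∀ v : V,
      Gop cO ps Q P 0 (Gop cO ps Q P (-1) v) + Gop cO ps Q P (-1) (Gop cO ps Q P 0 v) =
        (2 : ℂ) • L0op cO ps Q P v := by
  intro v
  set α₀ : ℂ := Complex.I * (Q * (((0 : ℤ) : ℂ) + 1 / 2) + P)
  set α₁ : ℂ := Complex.I * (Q * (((-1 : ℤ) : ℂ) + 1 / 2) + P)
  have hα : α₀ * α₁ = Q ^ 2 / 4 - P ^ 2 := by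
    simp only [α₀, α₁]
    push_cast
    linear_combination (P ^ 2 - Q ^ 2 / 4) * Complex.I_sq
  have hSS := Gosc_zero_anticomm_eq_two_smul hcc hpp hcp hfinG (hfinB v) (hfinF v)
  have hS0 := Gosc_ps_add_ps_Gosc hpp hcp (hfinG 0) (-1) v
  have hS1 := Gosc_ps_add_ps_Gosc hpp hcp (hfinG (-1)) 0 v
  have hψψ := hpp 0 (-1) v
  simp only [Int.reduceNeg, zero_add, neg_add_cancel, ↓reduceIte, add_zero] at hS0 hS1 hψψ
  simp only [Gop_eq_Gosc_add, L0op, (isLinearMap_Gosc (hfinG 0)).map_add,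
    (isLinearMap_Gosc (hfinG (-1))).map_add, (isLinearMap_Gosc (hfinG 0)).map_smul,
    (isLinearMap_Gosc (hfinG (-1))).map_smul, map_add, map_smul]
  linear_combination (norm := module)
    hSS + α₁ • hS0 + α₀ • hS1 + (α₀ * α₁) • hψψ + hα • v

/-- Free-field (Feigin–Fuks type) realization of the NSR algebra: on a space with
free boson modes `cO n = c_n` (`[c_n, c_m] = n δ_{n+m}`), free NS fermion modes
`ps m = ψ_{m+1/2}` (`{ψ_r, ψ_s} = δ_{r+s}`), commuting with each other, on which all
relevant sums are pointwise finite and all sufficiently positive modes annihilate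
every vector, the operators `G_r`, `L₀` defined by the free-field formulas satisfy
`{G_{1/2}, G_{-1/2}} = 2 L₀`. -/
theorem free_field_GG_eq_two_L0 (cO ps : ℤ → V →ₗ[ℂ] V) (Q P : ℂ)
    (hcc : ∀ (n m : ℤ), n ≠ 0 → m ≠ 0 → ∀ v : V,
      cO n (cO m v) - cO m (cO n v) = if n + m = 0 then (n : ℂ) • v else 0)
    (hpp : ∀ (r s : ℤ) (v : V),
      ps r (ps s v) + ps s (ps r v) = if r + s + 1 = 0 then v else 0)
    (hcp : ∀ (n r : ℤ) (v : V), cO n (ps r v) = ps r (cO n v))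
    (hfinG : ∀ (a : ℤ) (v : V),
      (Function.support fun n : ℤ => if n = 0 then (0 : V) else cO n (ps (a - n) v)).Finite)
    (hfinB : ∀ v : V,
      (Function.support fun k : ℤ => if 0 < k then cO (-k) (cO k v) else 0).Finite)
    (hfinF : ∀ v : V,
      (Function.support fun m : ℤ =>
        if 0 ≤ m then ((m : ℂ) + 1 / 2) • ps (-m - 1) (ps m v) else 0).Finite)
    (hann : ∀ v : V, ∃ N : ℤ, ∀ n : ℤ, N < n → cO n v = 0 ∧ ps n v = 0) :
    ∀ v : V,
      Gop cO ps Q P 0 (Gop cO ps Q P (-1) v) + Gop cO ps Q P (-1) (Gop cO ps Q P 0 v) =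
        (2 : ℂ) • L0op cO ps Q P v :=
  free_field_GG_eq_two_L0_general cO ps Q P hcc hpp hcp hfinG hfinB hfinF
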